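/- arXiv:2602.16940 — 5 statements merged into one kernel-verified Lean document; each statement's English description precedes it below -/
import Mathlib

section
/- Let N ≥ 1 be an integer and let m, p, σ be real numbers with max(N−2,0)/N < m < 1, p > 1 and σ > σ* := 2(p−1)/(1−m). Set C0 := (m Z0)^{1/(p−m)} where Z0 := (σ+2)(m(N+σ) − p(N−2))/(p−m)². Then the function f(ξ) := C0 ξ^{−(σ+2)/(p−m)} satisfies the profile equation (P), namely (f^m)''(ξ) + ((N−1)/ξ)(f^m)'(ξ) + α f(ξ) + β ξ f'(ξ) − ξ^σ f(ξ)^p = 0, for every ξ ∈ (0,∞). -/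
lemma deriv_crpow (C c : ℝ) {x : ℝ} (hx : 0 < x) :
    deriv (fun s : ℝ => C * s ^ c) x = C * c * x ^ (c - 1) := by
  have h := (Real.hasDerivAt_rpow_const (x := x) (p := c) (Or.inl hx.ne')).const_mul C
  rw [h.deriv]; ring

lemma deriv2_crpow (C c : ℝ) {x : ℝ} (hx : 0 < x) :
    deriv (deriv (fun s : ℝ => C * s ^ c)) x = C * c * (c - 1) * x ^ (c - 2) := by
  have hev : deriv (fun s : ℝ => C * s ^ c) =ᶠ[nhds x] fun s : ℝ => (C * c) * s ^ (c - 1) := by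
    filter_upwards [isOpen_Ioi.mem_nhds hx] with s hs
    exact deriv_crpow C c hs
  rw [hev.deriv_eq, deriv_crpow _ _ hx, show c - 1 - 1 = c - 2 by ring]


/-- The function f(ξ) = C0 ξ^{-(σ+2)/(p-m)}, with C0 = (m Z0)^{1/(p-m)},
is an exact (stationary in self-similar variables) solution of the profile equation (P)
on (0,∞). -/
theorem stmt5 (N : ℕ) (hN : 1 ≤ N) (m p σ : ℝ)
    (hm1 : max ((N : ℝ) - 2) 0 / N < m) (hm2 : m < 1) (hp : 1 < p)
    (hσ : 2 * (p - 1) / (1 - m) < σ)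
    (α β Z0 C0 : ℝ)
    (hα : α = (σ + 2) / ((1 - m) * (σ - 2 * (p - 1) / (1 - m))))
    (hβ : β = (p - m) / ((1 - m) * (σ - 2 * (p - 1) / (1 - m))))
    (hZ0 : Z0 = (σ + 2) * (m * ((N : ℝ) + σ) - p * ((N : ℝ) - 2)) / (p - m) ^ 2)
    (hC0 : C0 = (m * Z0) ^ (1 / (p - m)))
    (f : ℝ → ℝ) (hf : f = fun ξ : ℝ => C0 * ξ ^ (-(σ + 2) / (p - m))) :
    ∀ ξ : ℝ, 0 < ξ →
      deriv (deriv (fun s : ℝ => f s ^ m)) ξ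
        + (((N : ℝ) - 1) / ξ) * deriv (fun s : ℝ => f s ^ m) ξ
        + α * f ξ + β * ξ * deriv f ξ - ξ ^ σ * f ξ ^ p = 0 := by
  intro ξ hξ
  set γ : ℝ := -(σ + 2) / (p - m) with hγ
  -- basic positivity facts
  have hNpos : (0:ℝ) < N := by exact_mod_cast hN
  have h1m : (0:ℝ) < 1 - m := by linarith
  have hm0 : 0 < m :=
    lt_of_le_of_lt (div_nonneg (le_max_right _ _) hNpos.le) hm1
  have hpm : 0 < p - m := by linarith
  have hN2 : (N:ℝ) - 2 < m * N := by
    have := (div_lt_iff₀ hNpos).mp hm1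
    calc (N:ℝ) - 2 ≤ max ((N:ℝ) - 2) 0 := le_max_left _ _
    _ < m * N := this
  have hσ' : 2 * (p - 1) < σ * (1 - m) := (div_lt_iff₀ h1m).mp hσ
  have hσ0 : 0 < σ := by nlinarith
  have h2N : 0 < 2 - (N:ℝ) * (1 - m) := by nlinarith
  have hnum : 0 < m * ((N : ℝ) + σ) - p * ((N : ℝ) - 2) := by
    nlinarith [mul_lt_mul_of_pos_left hσ' hm0,
      mul_lt_mul_of_pos_left hN2 (mul_pos h1m (by linarith : (0:ℝ) < p)),
      mul_pos (mul_pos hm0 (by linarith : (0:ℝ) < p - 1)) h2N]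
  have hZ0pos : 0 < m * Z0 := by
    rw [hZ0]
    exact mul_pos hm0 (div_pos (mul_pos (by linarith) hnum) (pow_pos hpm 2))
  have hC0pos : 0 < C0 := by rw [hC0]; exact Real.rpow_pos_of_pos hZ0pos _
  have hC0pm : C0 ^ (p - m) = m * Z0 := by
    rw [hC0, ← Real.rpow_mul hZ0pos.le, one_div, inv_mul_cancel₀ hpm.ne', Real.rpow_one]
  have hds : σ - 2 * (p - 1) / (1 - m) ≠ 0 := by
    have : 0 < σ - 2 * (p - 1) / (1 - m) := by linarith
    exact this.ne'
  -- derivatives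
  have hev : (fun s : ℝ => f s ^ m) =ᶠ[nhds ξ] fun s : ℝ => C0 ^ m * s ^ (γ * m) := by
    filter_upwards [isOpen_Ioi.mem_nhds hξ] with s hs
    rw [hf]
    simp only
    rw [Real.mul_rpow hC0pos.le (Real.rpow_nonneg (le_of_lt hs) _),
      ← Real.rpow_mul (le_of_lt hs)]
  have h2 : deriv (deriv (fun s : ℝ => f s ^ m)) ξ
      = C0 ^ m * (γ * m) * (γ * m - 1) * ξ ^ (γ * m - 2) := by
    rw [hev.deriv.deriv_eq, deriv2_crpow _ _ hξ]
  have h1 : deriv (fun s : ℝ => f s ^ m) ξ = C0 ^ m * (γ * m) * ξ ^ (γ * m - 1) := by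
    rw [hev.deriv_eq, deriv_crpow _ _ hξ]
  have h0 : deriv f ξ = C0 * γ * ξ ^ (γ - 1) := by
    rw [hf]; exact deriv_crpow _ _ hξ
  rw [h2, h1, h0]
  simp only [hf]
  -- algebraic identities
  have e1 : ξ ^ (γ * m - 1) = ξ ^ (γ * m - 2) * ξ := by
    rw [← Real.rpow_add_one hξ.ne']
    congr 1; ring
  have e2 : ξ * ξ ^ (γ - 1) = ξ ^ γ := by
    rw [mul_comm, ← Real.rpow_add_one hξ.ne']
    congr 1; ring
  have hd2 : σ * (1 - m) - 2 * (p - 1) ≠ 0 := by nlinarith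
  have e6 : α + β * γ = 0 := by
    rw [hα, hβ, hγ]
    field_simp
    ring
  have t1 : α * (C0 * ξ ^ γ) + β * ξ * (C0 * γ * ξ ^ (γ - 1)) = 0 := by
    linear_combination C0 * ξ ^ γ * e6 + β * C0 * γ * e2
  have t2 : ξ ^ σ * (C0 * ξ ^ γ) ^ p = (m * Z0) * C0 ^ m * ξ ^ (γ * m - 2) := by
    rw [Real.mul_rpow hC0pos.le (Real.rpow_nonneg hξ.le _), ← Real.rpow_mul hξ.le]
    have hexp : σ + γ * p = γ * m - 2 := by
      rw [hγ]; field_simp; ring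
    calc ξ ^ σ * (C0 ^ p * ξ ^ (γ * p))
        = C0 ^ p * ξ ^ (σ + γ * p) := by rw [Real.rpow_add hξ]; ring
      _ = (C0 ^ (p - m) * C0 ^ m) * ξ ^ (γ * m - 2) := by
          rw [hexp, ← Real.rpow_add hC0pos]; ring_nf
      _ = (m * Z0) * C0 ^ m * ξ ^ (γ * m - 2) := by rw [hC0pm]
  have t3 : (((N:ℝ) - 1) / ξ) * (C0 ^ m * (γ * m) * ξ ^ (γ * m - 1))
      = ((N:ℝ) - 1) * (C0 ^ m * (γ * m)) * ξ ^ (γ * m - 2) := by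
    rw [e1]; field_simp
  have e7 : m * γ * (m * γ + (N:ℝ) - 2) = m * Z0 := by
    rw [hγ, hZ0]; field_simp; ring
  linear_combination t3 + t1 - t2 + C0 ^ m * ξ ^ (γ * m - 2) * e7
end

section
/- Let N ≥ 1 be an integer and let m, p, σ be real numbers with max(N−2,0)/N < m < 1, p > 1 and σ > σ* := 2(p−1)/(1−m). Let 0 < a < b ≤ ∞ and let f : (a,b) → (0,∞) be twice continuously differentiable and satisfy the profile equation (P) at every ξ ∈ (a,b). Define, for η ∈ (log a, log b), x(η) := (α/m) e^{2η} f(e^η)^{1−m}, y(η) := e^η f'(e^η)/f(e^η), z(η) := (1/m) e^{(σ+2)η} f(e^η)^{p−m}. Then (x,y,z) is a solution on (log a, log b) of the system (S): x' = x(2+(1−m)y), y' = −x − (N−2)y + z − m y² − ((p−m)/(σ+2)) x y, z' = z(σ+2 + (p−m)y). -/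
/-!
Write `ξ = exp η`, so that `d/dη = ξ d/dξ`. The variables `x` and `z` are constants times
`ξ ^ k * f ξ ^ r`, whose logarithmic `η`-derivative is `k + r y`; this gives the `x` and `z`
equations. For `y = ξ f' / f` one gets `y' = y - y ^ 2 + ξ ^ 2 f'' / f`, and multiplying (P) by
`ξ ^ 2 / (m f ^ m)` expresses `ξ ^ 2 f'' / f` through `x`, `y`, `z`, because
`β / α = (p - m) / (σ + 2)`.
-/

open Real

theorem hasDerivAt_const_mul_exp_mul_rpow_comp_exp {f : ℝ → ℝ} {f' η : ℝ} (c k r : ℝ)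
    (hf : HasDerivAt f f' (exp η)) (hpos : 0 < f (exp η)) :
    HasDerivAt (fun t => c * exp (k * t) * f (exp t) ^ r)
      (c * exp (k * η) * f (exp η) ^ r * (k + r * (exp η * f' / f (exp η)))) η := by
  have h := (((hasDerivAt_id η).const_mul k).exp.const_mul c).fun_mul
    ((hf.comp η (hasDerivAt_exp η)).rpow_const (p := r) (Or.inl hpos.ne'))
  refine h.congr_deriv ?_
  simp only [id, Function.comp_apply, rpow_sub_one hpos.ne']
  field_simp

theorem hasDerivAt_exp_mul_div_comp_exp {f g : ℝ → ℝ} {g' η : ℝ}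
    (hf : HasDerivAt f (g (exp η)) (exp η)) (hg : HasDerivAt g g' (exp η))
    (hne : f (exp η) ≠ 0) :
    HasDerivAt (fun t => exp t * g (exp t) / f (exp t))
      (exp η * g (exp η) / f (exp η) + exp η ^ 2 * g' / f (exp η)
        - (exp η * g (exp η) / f (exp η)) ^ 2) η := by
  have h := ((hasDerivAt_exp η).fun_mul (hg.comp η (hasDerivAt_exp η))).fun_div
    (hf.comp η (hasDerivAt_exp η)) hne
  refine h.congr_deriv ?_
  simp only [Function.comp_apply]
  field_simp

theorem hasDerivAt_deriv_rpow_const {f : ℝ → ℝ} {U : Set ℝ} {ξ f'' : ℝ} (m : ℝ)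
    (hU : IsOpen U) (hf : DifferentiableOn ℝ f U) (hne : ∀ s ∈ U, f s ≠ 0) (hξ : ξ ∈ U)
    (hf' : HasDerivAt (deriv f) f'' ξ) :
    HasDerivAt (deriv fun s => f s ^ m)
      (f'' * m * f ξ ^ (m - 1)
        + deriv f ξ * m * (deriv f ξ * (m - 1) * f ξ ^ (m - 1 - 1))) ξ := by
  have hfU : ∀ s ∈ U, HasDerivAt f (deriv f s) s :=
    fun s hs => ((hf s hs).differentiableAt (hU.mem_nhds hs)).hasDerivAt
  have heq : (deriv fun s => f s ^ m) =ᶠ[nhds ξ] fun s => deriv f s * m * f s ^ (m - 1) :=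
    Filter.eventuallyEq_of_mem (hU.mem_nhds hξ) fun s hs =>
      ((hfU s hs).rpow_const (Or.inl (hne s hs))).deriv
  exact ((hf'.mul_const m).fun_mul
    ((hfU ξ hξ).rpow_const (Or.inl (hne ξ hξ)))).congr_of_eventuallyEq heq

theorem sq_mul_div_eq_of_profile {n m p σ α β ξ F D1 D2 : ℝ} (hm : m ≠ 0)
    (hβ : β = α * ((p - m) / (σ + 2))) (hξ : 0 < ξ) (hF : 0 < F)
    (h : D2 * m * F ^ (m - 1) + D1 * m * (D1 * (m - 1) * F ^ (m - 1 - 1))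
        + n / ξ * (D1 * m * F ^ (m - 1)) + α * F + β * ξ * D1 - ξ ^ σ * F ^ p = 0) :
    ξ ^ 2 * D2 / F = -(α / m * ξ ^ 2 * F ^ (1 - m)) - n * (ξ * D1 / F)
      + 1 / m * (ξ ^ σ * ξ ^ 2) * F ^ (p - m) - (m - 1) * (ξ * D1 / F) ^ 2
      - (p - m) / (σ + 2) * (α / m * ξ ^ 2 * F ^ (1 - m)) * (ξ * D1 / F) := by
  have hFm : 0 < F ^ m := rpow_pos_of_pos hF m
  simp only [rpow_sub hF, rpow_one] at h ⊢
  subst hβ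
  field_simp
  field_simp at h
  linear_combination h

theorem self_similar_exponent_ratio {m p σ α β : ℝ} (hm : m < 1) (hp : 1 < p)
    (hσ : 2 * (p - 1) / (1 - m) < σ)
    (hα : α = (σ + 2) / ((1 - m) * (σ - 2 * (p - 1) / (1 - m))))
    (hβ : β = (p - m) / ((1 - m) * (σ - 2 * (p - 1) / (1 - m)))) :
    β = α * ((p - m) / (σ + 2)) := by
  have hσ2 : σ + 2 ≠ 0 := by
    have := (div_pos (by linarith) (by linarith : 0 < 1 - m)).trans hσ
    positivity
  rw [hα, hβ, div_mul_div_comm, mul_comm (σ + 2), mul_div_mul_right _ _ hσ2]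

theorem ContDiffOn.hasDerivAt_and_hasDerivAt_deriv {f : ℝ → ℝ} {U : Set ℝ} {x : ℝ}
    (hf : ContDiffOn ℝ 2 f U) (hU : IsOpen U) (hx : x ∈ U) :
    HasDerivAt f (deriv f x) x ∧ HasDerivAt (deriv f) (deriv (deriv f) x) x :=
  ⟨((hf.differentiableOn two_ne_zero x hx).differentiableAt (hU.mem_nhds hx)).hasDerivAt,
    (((hf.deriv_of_isOpen hU one_add_one_eq_two.le).differentiableOn one_ne_zero x
      hx).differentiableAt (hU.mem_nhds hx)).hasDerivAt⟩

theorem isOpen_setOf_lt_and_coe_lt (a : ℝ) (b : EReal) :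
    IsOpen {ξ : ℝ | a < ξ ∧ (ξ : EReal) < b} :=
  isOpen_Ioi.inter (isOpen_Iio.preimage continuous_coe_real_ereal)

theorem stmt8_general (N : ℕ) (m p σ : ℝ)
    (hm1 : max ((N : ℝ) - 2) 0 / N < m) (hm2 : m < 1) (hp : 1 < p)
    (hσ : 2 * (p - 1) / (1 - m) < σ)
    (α β : ℝ)
    (hα : α = (σ + 2) / ((1 - m) * (σ - 2 * (p - 1) / (1 - m))))
    (hβ : β = (p - m) / ((1 - m) * (σ - 2 * (p - 1) / (1 - m))))
    (a : ℝ) (b : EReal)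
    (f : ℝ → ℝ)
    (hreg : ContDiffOn ℝ 2 f {ξ : ℝ | a < ξ ∧ (ξ : EReal) < b})
    (hpos : ∀ ξ : ℝ, a < ξ → (ξ : EReal) < b → 0 < f ξ)
    (hP : ∀ ξ : ℝ, a < ξ → (ξ : EReal) < b →
      deriv (deriv (fun s : ℝ => f s ^ m)) ξ
        + (((N : ℝ) - 1) / ξ) * deriv (fun s : ℝ => f s ^ m) ξ
        + α * f ξ + β * ξ * deriv f ξ - ξ ^ σ * f ξ ^ p = 0)
    (X Y Z : ℝ → ℝ)
    (hX : X = fun η : ℝ => (α / m) * Real.exp (2 * η) * f (Real.exp η) ^ (1 - m))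
    (hY : Y = fun η : ℝ => Real.exp η * deriv f (Real.exp η) / f (Real.exp η))
    (hZ : Z = fun η : ℝ => (1 / m) * Real.exp ((σ + 2) * η) * f (Real.exp η) ^ (p - m)) :
    ∀ η : ℝ, a < Real.exp η → ((Real.exp η : ℝ) : EReal) < b →
      HasDerivAt X (X η * (2 + (1 - m) * Y η)) η ∧
      HasDerivAt Y (-(X η) - ((N : ℝ) - 2) * Y η + Z η - m * (Y η) ^ 2
        - (p - m) / (σ + 2) * X η * Y η) η ∧
      HasDerivAt Z (Z η * (σ + 2 + (p - m) * Y η)) η := by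
  intro η hηa hηb
  subst hX hY hZ
  have hm0 : m ≠ 0 :=
    ((div_nonneg (le_max_right _ _) N.cast_nonneg).trans_lt hm1).ne'
  set U := {ξ : ℝ | a < ξ ∧ (ξ : EReal) < b}
  have hU : IsOpen U := isOpen_setOf_lt_and_coe_lt a b
  have hξ : exp η ∈ U := ⟨hηa, hηb⟩
  have hF := hpos _ hηa hηb
  obtain ⟨hD1, hD2⟩ := hreg.hasDerivAt_and_hasDerivAt_deriv hU hξ
  have hexp : exp ((σ + 2) * η) = exp η ^ σ * exp η ^ 2 := by
    rw [mul_comm, exp_mul, rpow_add (exp_pos η), rpow_two]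
  have hexp2 : exp (2 * η) = exp η ^ 2 := by rw [sq, ← exp_add, two_mul]
  refine ⟨hasDerivAt_const_mul_exp_mul_rpow_comp_exp _ _ _ hD1 hF, ?_,
    hasDerivAt_const_mul_exp_mul_rpow_comp_exp _ _ _ hD1 hF⟩
  have hprofile := hP _ hηa hηb
  rw [(hasDerivAt_deriv_rpow_const m hU (hreg.differentiableOn two_ne_zero)
    (fun s hs => (hpos s hs.1 hs.2).ne') hξ hD2).deriv, (hD1.rpow_const (Or.inl hF.ne')).deriv]
    at hprofile
  refine (hasDerivAt_exp_mul_div_comp_exp hD1 hD2 hF.ne').congr_deriv ?_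
  beta_reduce
  rw [add_sub_assoc, sq_mul_div_eq_of_profile hm0
    (self_similar_exponent_ratio hm2 hp hσ hα hβ) (exp_pos η) hF hprofile, hexp, hexp2]
  ring

/-- The change of variables x = (α/m)ξ²f^{1-m}, y = ξf'/f,
z = (1/m)ξ^{σ+2}f^{p-m}, η = log ξ, maps any positive C² solution of the profile
equation (P) on (a,b) (with 0 < a < b ≤ ∞) into a solution of the system (S)
on (log a, log b). -/
theorem stmt8 (N : ℕ) (hN : 1 ≤ N) (m p σ : ℝ)
    (hm1 : max ((N : ℝ) - 2) 0 / N < m) (hm2 : m < 1) (hp : 1 < p)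
    (hσ : 2 * (p - 1) / (1 - m) < σ)
    (α β : ℝ)
    (hα : α = (σ + 2) / ((1 - m) * (σ - 2 * (p - 1) / (1 - m))))
    (hβ : β = (p - m) / ((1 - m) * (σ - 2 * (p - 1) / (1 - m))))
    (a : ℝ) (b : EReal) (ha : 0 < a) (hab : (a : EReal) < b)
    (f : ℝ → ℝ)
    (hreg : ContDiffOn ℝ 2 f {ξ : ℝ | a < ξ ∧ (ξ : EReal) < b})
    (hpos : ∀ ξ : ℝ, a < ξ → (ξ : EReal) < b → 0 < f ξ)
    (hP : ∀ ξ : ℝ, a < ξ → (ξ : EReal) < b →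
      deriv (deriv (fun s : ℝ => f s ^ m)) ξ
        + (((N : ℝ) - 1) / ξ) * deriv (fun s : ℝ => f s ^ m) ξ
        + α * f ξ + β * ξ * deriv f ξ - ξ ^ σ * f ξ ^ p = 0)
    (X Y Z : ℝ → ℝ)
    (hX : X = fun η : ℝ => (α / m) * Real.exp (2 * η) * f (Real.exp η) ^ (1 - m))
    (hY : Y = fun η : ℝ => Real.exp η * deriv f (Real.exp η) / f (Real.exp η))
    (hZ : Z = fun η : ℝ => (1 / m) * Real.exp ((σ + 2) * η) * f (Real.exp η) ^ (p - m)) :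
    ∀ η : ℝ, a < Real.exp η → ((Real.exp η : ℝ) : EReal) < b →
      HasDerivAt X (X η * (2 + (1 - m) * Y η)) η ∧
      HasDerivAt Y (-(X η) - ((N : ℝ) - 2) * Y η + Z η - m * (Y η) ^ 2
        - (p - m) / (σ + 2) * X η * Y η) η ∧
      HasDerivAt Z (Z η * (σ + 2 + (p - m) * Y η)) η :=
  stmt8_general N m p σ hm1 hm2 hp hσ α β hα hβ a b f hreg hpos hP X Y Z hX hY hZ
end

section
/- Let N ≥ 1 be an integer and let m, p, σ be real numbers with max(N−2,0)/N < m < 1, p > 1 and σ > σ* := 2(p−1)/(1−m), and set Z0 := (σ+2)(m(N+σ) − p(N−2))/(p−m)². Let (x,y,z) be a solution of the system (S) on an interval I and let η₀ ∈ I satisfy y(η₀) > −(σ+2)/(p−m) and z(η₀) > Z0. Then for every η ∈ I with η ≥ η₀ one has y(η) > −(σ+2)/(p−m) and z(η) > Z0; that is, the region R := {(x,y,z) : y > −(σ+2)/(p−m), z > Z0} is positively invariant for (S). -/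
/-!
Put `w := σ + 2 + (p - m) y`, so that the region is `{z > Z0, w > 0}`. Along (S) one has
`z' = z w` and, precisely because of the value of `Z0`,
`w' = (p - m) (z - Z0) - k w` with `k := N - 2 + m (y - (σ + 2) / (p - m)) + (p - m) x / (σ + 2)`.
Since `Z0 > 0`, inside the region `z` increases, and `w e^{K t}` increases as soon as `K` bounds `k`
from above on a compact time interval. So neither `z - Z0` nor `w` can vanish at a first exit time.
-/

open Set Real

theorem neg_div_lt_iff_pos_add_mul {c d t : ℝ} (hd : 0 < d) : -(c / d) < t ↔ 0 < c + d * t := by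
  rw [neg_lt_iff_pos_add', div_add' _ _ _ hd.ne', div_pos_iff_of_pos_right hd, mul_comm]

theorem pos_on_Icc_of_pos_before {f : ℝ → ℝ} {a b : ℝ} (hf : ContinuousOn f (Icc a b))
    (ha : 0 < f a) (hstep : ∀ c ∈ Ioc a b, (∀ t ∈ Ico a c, 0 < f t) → 0 < f c) :
    ∀ t ∈ Icc a b, 0 < f t := by
  by_contra! hneg
  set S := Icc a b ∩ f ⁻¹' Iic 0
  have hSne : S.Nonempty := let ⟨t, ht, hft⟩ := hneg; ⟨t, ht, hft⟩
  have hSbdd : BddBelow S := ⟨a, fun t ht => ht.1.1⟩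
  obtain ⟨⟨hac, hcb⟩, hfc⟩ :=
    (hf.preimage_isClosed_of_isClosed isClosed_Icc isClosed_Iic).csInf_mem hSne hSbdd
  have hac' : a < sInf S := hac.lt_of_ne fun h => (h ▸ hfc : f a ≤ 0).not_gt ha
  refine (hstep _ ⟨hac', hcb⟩ fun t ht => ?_).not_ge hfc
  by_contra! hft
  exact (csInf_le hSbdd ⟨⟨ht.1, ht.2.le.trans hcb⟩, hft⟩).not_gt ht.2

theorem monotoneOn_mul_exp_of_hasDerivWithinAt {w w' : ℝ → ℝ} {a b K : ℝ}
    (hw : ContinuousOn w (Icc a b))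
    (hw' : ∀ t ∈ Ioo a b, HasDerivWithinAt w (w' t) (Ioo a b) t)
    (hK : ∀ t ∈ Ioo a b, -(K * w t) ≤ w' t) :
    MonotoneOn (fun t => w t * exp (K * t)) (Icc a b) := by
  have hexp (t : ℝ) : HasDerivAt (fun s => exp (K * s)) (exp (K * t) * K) t := by
    simpa using ((hasDerivAt_id t).const_mul K).exp
  refine monotoneOn_of_hasDerivWithinAt_nonneg (convex_Icc a b)
    (f' := fun t => w' t * exp (K * t) + w t * (exp (K * t) * K))
    (hw.mul (continuous_exp.comp (continuous_const_mul K)).continuousOn) ?_ ?_ <;>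
    rw [interior_Icc] <;> intro t ht
  · exact (hw' t ht).mul (hexp t).hasDerivWithinAt
  · rw [show w' t * exp (K * t) + w t * (exp (K * t) * K) = exp (K * t) * (w' t + K * w t) by ring]
    exact mul_nonneg (exp_pos _).le (by linarith [hK t ht])

section Barrier

variable {z w k : ℝ → ℝ} {Z0 β : ℝ}

theorem barrier_step {K a c : ℝ} (hZ0 : 0 ≤ Z0) (hβ : 0 ≤ β) (hac : a < c)
    (hz : ContinuousOn z (Icc a c)) (hw : ContinuousOn w (Icc a c))
    (hz' : ∀ t ∈ Ioo a c, HasDerivWithinAt z (z t * w t) (Ioo a c) t)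
    (hw' : ∀ t ∈ Ioo a c, HasDerivWithinAt w (β * (z t - Z0) - k t * w t) (Ioo a c) t)
    (hk : ∀ t ∈ Ioo a c, k t ≤ K) (hbefore : ∀ t ∈ Ico a c, Z0 < z t ∧ 0 < w t) :
    Z0 < z c ∧ 0 < w c := by
  have hin (t : ℝ) (ht : t ∈ Ioo a c) : Z0 < z t ∧ 0 < w t := hbefore t ⟨ht.1.le, ht.2⟩
  have hzmono : MonotoneOn z (Icc a c) :=
    monotoneOn_of_hasDerivWithinAt_nonneg (convex_Icc a c) hz (by rwa [interior_Icc]) <| by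
      rw [interior_Icc]
      intro t ht
      exact (mul_pos (hZ0.trans_lt (hin t ht).1) (hin t ht).2).le
  have hwmono : MonotoneOn (fun t => w t * exp (K * t)) (Icc a c) :=
    monotoneOn_mul_exp_of_hasDerivWithinAt hw hw' fun t ht => by
      obtain ⟨hzt, hwt⟩ := hin t ht
      nlinarith [hk t ht]
  have ha : a ∈ Icc a c := left_mem_Icc.2 hac.le
  have hc : c ∈ Icc a c := right_mem_Icc.2 hac.le
  obtain ⟨hza, hwa⟩ := hbefore a (left_mem_Ico.2 hac)
  refine ⟨hza.trans_le (hzmono ha hc hac.le), pos_of_mul_pos_left (b := exp (K * c)) ?_ ?_⟩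
  · exact (mul_pos hwa (exp_pos _)).trans_le (hwmono ha hc hac.le)
  · exact (exp_pos _).le

theorem barrier_forall_ge {I : Set ℝ} (hI : I.OrdConnected) (hZ0 : 0 ≤ Z0) (hβ : 0 ≤ β)
    (hz : ∀ t ∈ I, HasDerivWithinAt z (z t * w t) I t)
    (hw : ∀ t ∈ I, HasDerivWithinAt w (β * (z t - Z0) - k t * w t) I t)
    (hk : ContinuousOn k I) {a : ℝ} (ha : a ∈ I) (h0 : Z0 < z a ∧ 0 < w a) :
    ∀ b ∈ I, a ≤ b → Z0 < z b ∧ 0 < w b := by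
  intro b hb hab
  have hsub : Icc a b ⊆ I := hI.out ha hb
  obtain ⟨K, hK⟩ := isCompact_Icc.bddAbove_image (hk.mono hsub)
  have hzc : ContinuousOn z (Icc a b) := fun t ht => (hz t (hsub ht)).continuousWithinAt.mono hsub
  have hwc : ContinuousOn w (Icc a b) := fun t ht => (hw t (hsub ht)).continuousWithinAt.mono hsub
  have key := pos_on_Icc_of_pos_before (f := fun t => min (z t - Z0) (w t))
    ((hzc.sub continuousOn_const).inf hwc) (by simpa using h0) ?_ b ⟨hab, le_rfl⟩
  · simpa using key
  intro c hc hbefore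
  have hsub' : Icc a c ⊆ Icc a b := Icc_subset_Icc_right hc.2
  have hIoo : Ioo a c ⊆ I := Ioo_subset_Icc_self.trans (hsub'.trans hsub)
  simpa using barrier_step hZ0 hβ hc.1 (hzc.mono hsub') (hwc.mono hsub')
    (fun t ht => (hz t (hIoo ht)).mono hIoo) (fun t ht => (hw t (hIoo ht)).mono hIoo)
    (fun t ht => hK ⟨t, Ioo_subset_Icc_self.trans hsub' ht, rfl⟩)
    (fun t ht => by simpa using hbefore t ht)

end Barrier

theorem Z0_pos {N : ℕ} (hN : 1 ≤ N) {m p σ : ℝ} (hm1 : max ((N : ℝ) - 2) 0 / N < m)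
    (hm2 : m < 1) (hp : 1 < p) (hσ : 2 * (p - 1) / (1 - m) < σ) :
    0 < (σ + 2) * (m * ((N : ℝ) + σ) - p * ((N : ℝ) - 2)) / (p - m) ^ 2 := by
  have hNpos : (0 : ℝ) < N := by exact_mod_cast hN
  have h1m : 0 < 1 - m := by linarith
  have hm0 : 0 < m := (div_nonneg (le_max_right _ _) hNpos.le).trans_lt hm1
  have hmN : (N : ℝ) - 2 < m * N := by
    rw [← div_lt_iff₀ hNpos]
    exact (div_le_div_of_nonneg_right (le_max_left _ _) hNpos.le).trans_lt hm1
  have hσ' : 2 * (p - 1) < σ * (1 - m) := by rwa [div_lt_iff₀ h1m] at hσ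
  have hσ0 : 0 < σ := by nlinarith
  have hnum : 0 < m * ((N : ℝ) + σ) - p * ((N : ℝ) - 2) := by
    nlinarith [mul_pos hm0 (by linarith : 0 < σ * (1 - m) - 2 * (p - 1)),
      mul_pos (by linarith : 0 < p - 1) (by linarith : 0 < m * N - ((N : ℝ) - 2)),
      mul_pos h1m (by linarith : 0 < m * N - ((N : ℝ) - 2))]
  have hpm : p - m ≠ 0 := by linarith
  positivity

/-- The region R = {y > -(σ+2)/(p-m), z > Z0} is positively invariant
for the system (S). -/
theorem stmt9 (N : ℕ) (hN : 1 ≤ N) (m p σ : ℝ)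
    (hm1 : max ((N : ℝ) - 2) 0 / N < m) (hm2 : m < 1) (hp : 1 < p)
    (hσ : 2 * (p - 1) / (1 - m) < σ)
    (Z0 : ℝ)
    (hZ0 : Z0 = (σ + 2) * (m * ((N : ℝ) + σ) - p * ((N : ℝ) - 2)) / (p - m) ^ 2)
    (I : Set ℝ) (hI : I.OrdConnected)
    (x y z : ℝ → ℝ)
    (hx : ∀ η ∈ I, HasDerivWithinAt x (x η * (2 + (1 - m) * y η)) I η)
    (hy : ∀ η ∈ I, HasDerivWithinAt y (-(x η) - ((N : ℝ) - 2) * y η + z η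
      - m * (y η) ^ 2 - (p - m) / (σ + 2) * x η * y η) I η)
    (hz : ∀ η ∈ I, HasDerivWithinAt z (z η * (σ + 2 + (p - m) * y η)) I η)
    (η₀ : ℝ) (hη₀ : η₀ ∈ I)
    (hy0 : -((σ + 2) / (p - m)) < y η₀) (hz0 : Z0 < z η₀) :
    ∀ η ∈ I, η₀ ≤ η → -((σ + 2) / (p - m)) < y η ∧ Z0 < z η := by
  have hpm : 0 < p - m := by linarith
  have hσ2 : σ + 2 ≠ 0 := by linarith [(div_pos (by linarith) (by linarith)).trans hσ]
  set k : ℝ → ℝ := fun t =>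
    (N - 2 : ℝ) + m * (y t - (σ + 2) / (p - m)) + (p - m) * x t / (σ + 2)
  have hk : ContinuousOn k I := by
    have hxc : ContinuousOn x I := fun t ht => (hx t ht).continuousWithinAt
    have hyc : ContinuousOn y I := fun t ht => (hy t ht).continuousWithinAt
    fun_prop
  have hw (η : ℝ) (hη : η ∈ I) : HasDerivWithinAt (fun t => σ + 2 + (p - m) * y t)
      ((p - m) * (z η - Z0) - k η * (σ + 2 + (p - m) * y η)) I η := by
    refine (((hy η hη).const_mul (p - m)).const_add (σ + 2)).congr_deriv ?_
    simp only [hZ0, k]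
    field_simp [hpm.ne']
    ring
  intro η hη hle
  simp only [neg_div_lt_iff_pos_add_mul hpm] at hy0 ⊢
  exact (barrier_forall_ge hI (hZ0 ▸ Z0_pos hN hm1 hm2 hp hσ).le hpm.le hz hw hk hη₀
    ⟨hz0, hy0⟩ η hη hle).symm
end

section
/- Let N ≥ 1 be an integer and let m, p, σ be real numbers with max(N−2,0)/N < m < 1, p > 1 and σ > σ* := 2(p−1)/(1−m). Let (x,y,z) be a solution of the system (S) on an interval I and let η₀ ∈ I satisfy x(η₀) ≥ 0, y(η₀) > 0 and z(η₀) > x(η₀). Then for every η ∈ I with η ≥ η₀ one has y(η) > 0 and z(η) > x(η); that is, the region R₀ := {(x,y,z) : x ≥ 0, y > 0, z > x} is positively invariant for (S). -/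
open Set MeasureTheory intervalIntegral Filter

/-- Solutions of a linear ODE `g' = f·g` on `Icc a b` are given by the exponential formula. -/
lemma linODE {a b : ℝ} (hab : a ≤ b) {f g : ℝ → ℝ}
    (hf : ContinuousOn f (Icc a b))
    (hg : ∀ t ∈ Icc a b, HasDerivWithinAt g (f t * g t) (Icc a b) t) :
    ∀ t ∈ Icc a b, g t = g a * Real.exp (∫ u in a..t, f u) := by
  set F : ℝ → ℝ := fun t => ∫ u in a..t, f u with hF
  have hint : ∀ t ∈ Icc a b, IntervalIntegrable f volume a t := by
    intro t ht
    apply ContinuousOn.intervalIntegrable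
    rw [uIcc_of_le ht.1]
    exact hf.mono (Icc_subset_Icc_right ht.2)
  have hFd : ∀ t ∈ Icc a b, HasDerivWithinAt F (f t) (Icc a b) t := by
    intro t ht
    haveI : Fact (t ∈ Icc a b) := ⟨ht⟩
    exact integral_hasDerivWithinAt_right (hint t ht)
      (hf.stronglyMeasurableAtFilter_nhdsWithin measurableSet_Icc t) (hf t ht)
  set h : ℝ → ℝ := fun t => g t * Real.exp (-F t) with hh
  have hd : ∀ t ∈ Icc a b, HasDerivWithinAt h 0 (Icc a b) t := by
    intro t ht
    have : HasDerivWithinAt h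
        (f t * g t * Real.exp (-F t) + g t * (Real.exp (-F t) * -(f t))) (Icc a b) t :=
      (hg t ht).mul (((hFd t ht).neg).exp)
    convert this using 1
    ring
  have hconst : ∀ t ∈ Icc a b, h t = h a := by
    intro t ht
    have := Convex.norm_image_sub_le_of_norm_hasDerivWithin_le
      (f' := fun _ => (0 : ℝ)) (C := 0) hd (fun u _ => by simp) (convex_Icc a b)
      (left_mem_Icc.2 hab) ht
    have h0 : ‖h t - h a‖ ≤ 0 := by simpa using this
    rwa [norm_le_zero_iff, sub_eq_zero] at h0
  intro t ht
  have h1 := hconst t ht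
  have hFa : F a = 0 := by simp [hF]
  have := h1
  simp only [hh, hFa, neg_zero, Real.exp_zero, mul_one] at this
  have hpos := Real.exp_pos (-F t)
  have : g t = g a * Real.exp (F t) := by
    have h2 : g t * Real.exp (-F t) * Real.exp (F t) = g a * Real.exp (F t) := by rw [this]
    rwa [mul_assoc, ← Real.exp_add, neg_add_cancel, Real.exp_zero, mul_one] at h2
  exact this

/-- The region R₀ = {x ≥ 0, y > 0, z > x} is positively invariant
for the system (S). -/
theorem stmt10 (N : ℕ) (hN : 1 ≤ N) (m p σ : ℝ)
    (hm1 : max ((N : ℝ) - 2) 0 / N < m) (hm2 : m < 1) (hp : 1 < p)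
    (hσ : 2 * (p - 1) / (1 - m) < σ)
    (I : Set ℝ) (hI : I.OrdConnected)
    (x y z : ℝ → ℝ)
    (hx : ∀ η ∈ I, HasDerivWithinAt x (x η * (2 + (1 - m) * y η)) I η)
    (hy : ∀ η ∈ I, HasDerivWithinAt y (-(x η) - ((N : ℝ) - 2) * y η + z η
      - m * (y η) ^ 2 - (p - m) / (σ + 2) * x η * y η) I η)
    (hz : ∀ η ∈ I, HasDerivWithinAt z (z η * (σ + 2 + (p - m) * y η)) I η)
    (η₀ : ℝ) (hη₀ : η₀ ∈ I)
    (hx0 : 0 ≤ x η₀) (hy0 : 0 < y η₀) (hz0 : x η₀ < z η₀) :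
    ∀ η ∈ I, η₀ ≤ η → 0 < y η ∧ x η < z η := by
  have hσpos : 0 < σ := lt_trans (div_pos (by linarith) (by linarith)) hσ
  have hyc : ContinuousOn y I := fun t ht => (hy t ht).continuousWithinAt
  have hxc : ContinuousOn x I := fun t ht => (hx t ht).continuousWithinAt
  have hzc : ContinuousOn z I := fun t ht => (hz t ht).continuousWithinAt
  intro η₁ hη₁I hle
  by_contra hcon
  rw [not_and_or] at hcon
  push_neg at hcon
  have hK : Set.Icc η₀ η₁ ⊆ I := hI.out hη₀ hη₁I
  set S : Set ℝ := Set.Icc η₀ η₁ ∩ (fun t => y t ⊓ (z t - x t)) ⁻¹' Set.Iic 0 with hS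
  have hmemS : ∀ t, t ∈ S ↔ t ∈ Set.Icc η₀ η₁ ∧ (y t ≤ 0 ∨ z t ≤ x t) := by
    intro t
    simp only [hS, Set.mem_inter_iff, Set.mem_preimage, Set.mem_Iic, inf_le_iff, sub_nonpos]
  have hSc : IsClosed S := by
    apply ContinuousOn.preimage_isClosed_of_isClosed _ isClosed_Icc isClosed_Iic
    exact ((hyc.mono hK).inf ((hzc.mono hK).sub (hxc.mono hK)))
  have hSne : S.Nonempty := by
    refine ⟨η₁, (hmemS η₁).2 ⟨Set.right_mem_Icc.2 hle, ?_⟩⟩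
    rcases hcon with h | h
    · exact Or.inl h
    · exact Or.inr h
  have hbdd : BddBelow S := ⟨η₀, fun t ht => ht.1.1⟩
  set T := sInf S with hT
  have hTS : T ∈ S := hSc.csInf_mem hSne hbdd
  have hTmem : T ∈ Set.Icc η₀ η₁ := hTS.1
  have hTI : T ∈ I := hK hTmem
  have hη₀S : η₀ ∉ S := by
    intro h
    rcases ((hmemS η₀).1 h).2 with h' | h' <;> linarith
  have hη₀T : η₀ < T := lt_of_le_of_ne hTmem.1 (fun h => hη₀S (h ▸ hTS))
  -- strict inequalities before T
  have hmin : ∀ u ∈ Set.Ico η₀ T, 0 < y u ∧ x u < z u := by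
    intro u hu
    by_contra h
    rw [not_and_or] at h
    push_neg at h
    have huS : u ∈ S := (hmemS u).2 ⟨⟨hu.1, le_trans hu.2.le hTmem.2⟩, h⟩
    exact absurd (csInf_le hbdd huS) (not_le.2 hu.2)
  -- Ioo η₀ T is inside I minus {T}, and accumulates at T
  have hIooI : Set.Ioo η₀ T ⊆ I := fun u hu =>
    hK ⟨hu.1.le, le_trans hu.2.le hTmem.2⟩
  haveI hnb : (nhdsWithin T (Set.Ioo η₀ T)).NeBot := by
    rw [← mem_closure_iff_nhdsWithin_neBot, closure_Ioo (ne_of_lt hη₀T)]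
    exact Set.right_mem_Icc.2 hη₀T.le
  -- y T ≥ 0 by continuity from the left
  have hyT : 0 ≤ y T := by
    have ht : Tendsto y (nhdsWithin T (Set.Ioo η₀ T)) (nhds (y T)) :=
      ((hy T hTI).continuousWithinAt).mono_left (nhdsWithin_mono T hIooI)
    refine ge_of_tendsto ht ?_
    filter_upwards [self_mem_nhdsWithin] with u hu
    exact (hmin u ⟨hu.1.le, hu.2⟩).1.le
  have hynn : ∀ u ∈ Set.Icc η₀ T, 0 ≤ y u := by
    intro u hu
    rcases eq_or_lt_of_le hu.2 with h | h
    · exact h ▸ hyT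
    · exact (hmin u ⟨hu.1, h⟩).1.le
  -- explicit formulas for x and z on [η₀, T]
  have hJI : Set.Icc η₀ T ⊆ I := fun u hu => hK ⟨hu.1, le_trans hu.2 hTmem.2⟩
  have hycJ : ContinuousOn y (Set.Icc η₀ T) := hyc.mono hJI
  have hxT := linODE hη₀T.le (f := fun t => 2 + (1 - m) * y t)
    (by fun_prop)
    (fun t ht => by
      have := (hx t (hJI ht)).mono hJI
      rwa [mul_comm] at this) T (Set.right_mem_Icc.2 hη₀T.le)
  have hzT := linODE hη₀T.le (f := fun t => σ + 2 + (p - m) * y t)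
    (by fun_prop)
    (fun t ht => by
      have := (hz t (hJI ht)).mono hJI
      rwa [mul_comm] at this) T (Set.right_mem_Icc.2 hη₀T.le)
  have hint1 : IntervalIntegrable (fun t => 2 + (1 - m) * y t) volume η₀ T := by
    apply ContinuousOn.intervalIntegrable
    rw [Set.uIcc_of_le hη₀T.le]
    fun_prop
  have hint2 : IntervalIntegrable (fun t => σ + 2 + (p - m) * y t) volume η₀ T := by
    apply ContinuousOn.intervalIntegrable
    rw [Set.uIcc_of_le hη₀T.le]
    fun_prop
  have hFle : (∫ u in η₀..T, (2 + (1 - m) * y u)) ≤ ∫ u in η₀..T, (σ + 2 + (p - m) * y u) := by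
    apply intervalIntegral.integral_mono_on hη₀T.le hint1 hint2
    intro u hu
    have := hynn u hu
    nlinarith
  -- z T > x T
  have hwT : x T < z T := by
    rw [hxT, hzT]
    have h1 := Real.exp_pos (∫ u in η₀..T, (2 + (1 - m) * y u))
    have h2 := Real.exp_le_exp.2 hFle
    have hz0' : 0 < z η₀ := lt_of_le_of_lt hx0 hz0
    nlinarith
  -- hence y T = 0
  have hyT0 : y T = 0 := by
    rcases ((hmemS T).1 hTS).2 with h | h
    · linarith
    · linarith
  -- derivative of y at T is z T - x T > 0, contradiction with left slope ≤ 0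
  set d := -(x T) - ((N : ℝ) - 2) * y T + z T - m * (y T) ^ 2 - (p - m) / (σ + 2) * x T * y T
    with hd
  have hdpos : 0 < d := by
    rw [hd, hyT0]
    ring_nf
    linarith
  have hslope := (hy T hTI)
  rw [hasDerivWithinAt_iff_tendsto_slope] at hslope
  have hsub : Set.Ioo η₀ T ⊆ I \ {T} := fun u hu =>
    ⟨hIooI hu, fun h => absurd (h ▸ hu.2) (lt_irrefl T)⟩
  have hslope' : Tendsto (slope y T) (nhdsWithin T (Set.Ioo η₀ T)) (nhds d) :=
    hslope.mono_left (nhdsWithin_mono T hsub)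
  have hle0 : d ≤ 0 := by
    refine le_of_tendsto hslope' ?_
    filter_upwards [self_mem_nhdsWithin] with u hu
    have hyu : 0 < y u := (hmin u ⟨hu.1.le, hu.2⟩).1
    have : slope y T u = y u / (u - T) := by
      rw [slope_def_field]; rw [hyT0]; ring_nf
    rw [this]
    apply div_nonpos_of_nonneg_of_nonpos hyu.le
    linarith [hu.2]
  linarith
end

section
/- Let N ≥ 1 be an integer and let m, p, σ be real numbers with max(N−2,0)/N < m < 1, p > 1 and σ > σ* := 2(p−1)/(1−m). Let (x,y,z) be a solution of the system (S) on an interval I with x(η) ≥ 0 and z(η) ≥ 0 for all η ∈ I, and suppose there exist η₁ < η₂ in I with y(η₁) > −(σ+2)/(p−m) and y(η₂) < −(σ+2)/(p−m). Then y(η) < −(σ+2)/(p−m) for every η ∈ I with η > η₂ (the plane y = −(σ+2)/(p−m) is a no-return plane in the decreasing y-direction). -/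
/-!
On the plane `y = c`, `c = -(σ+2)/(p-m)`, the `x`-terms of `y'` cancel, so there
`y' = z + K` with a constant `K < 0`; and below the plane `z' = z (σ+2+(p-m)y) ≤ 0`.
If a trajectory crossed the plane downwards at `η₀` and came back at `η₃ > η₀`, then
`z η₀ ≤ -K ≤ z η₃` while `z` is nonincreasing on `[η₀, η₃]`. Hence `z ≡ -K > 0` there,
which contradicts `z' < 0` strictly below the plane.
-/

open Set Filter Topology

lemma IsMaxOn.hasDerivWithinAt_Icc_left_nonpos {f : ℝ → ℝ} {f' a b : ℝ} (hab : a < b)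
    (h : IsMaxOn f (Icc a b) a) (hf : HasDerivWithinAt f f' (Icc a b) a) : f' ≤ 0 := by
  have hcone : b - a ∈ posTangentConeAt (Icc a b) a :=
    sub_mem_posTangentConeAt_of_segment_subset (segment_eq_Icc hab.le ▸ Subset.rfl)
  have := h.localize.hasFDerivWithinAt_nonpos hf hcone
  simp only [ContinuousLinearMap.toSpanSingleton_apply, smul_eq_mul] at this
  exact nonpos_of_mul_nonpos_right this (sub_pos.2 hab)

lemma IsMaxOn.hasDerivWithinAt_Icc_right_nonneg {f : ℝ → ℝ} {f' a b : ℝ} (hab : a < b)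
    (h : IsMaxOn f (Icc a b) b) (hf : HasDerivWithinAt f f' (Icc a b) b) : 0 ≤ f' := by
  have hcone : a - b ∈ posTangentConeAt (Icc a b) b :=
    sub_mem_posTangentConeAt_of_segment_subset (by rw [segment_symm, segment_eq_Icc hab.le])
  have := h.localize.hasFDerivWithinAt_nonpos hf hcone
  simp only [ContinuousLinearMap.toSpanSingleton_apply, smul_eq_mul] at this
  exact nonneg_of_mul_nonpos_right this (sub_neg.2 hab)

lemma exists_last_eq_of_le_of_lt {f : ℝ → ℝ} {a b c : ℝ} (hab : a ≤ b)
    (hf : ContinuousOn f (Icc a b)) (ha : c ≤ f a) (hb : f b < c) :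
    ∃ t ∈ Ico a b, f t = c ∧ ∀ s ∈ Ioc t b, f s < c := by
  set S := Icc a b ∩ f ⁻¹' {c}
  have hS : IsCompact S :=
    isCompact_Icc.of_isClosed_subset
      (hf.preimage_isClosed_of_isClosed isClosed_Icc isClosed_singleton) inter_subset_left
  obtain ⟨t₀, ht₀, hft₀⟩ := intermediate_value_Icc' hab hf ⟨hb.le, ha⟩
  have htS : sSup S ∈ S := hS.sSup_mem ⟨t₀, ht₀, hft₀⟩
  have hlt : ∀ s ∈ Ioc (sSup S) b, f s < c := by
    intro s hs
    by_contra! hcs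
    obtain ⟨r, hr, hfr⟩ := intermediate_value_Icc' hs.2 (hf.mono (Icc_subset_Icc
      (htS.1.1.trans hs.1.le) le_rfl)) ⟨hb.le, hcs⟩
    have : r ≤ sSup S := le_csSup hS.bddAbove ⟨⟨htS.1.1.trans (hs.1.le.trans hr.1), hr.2⟩, hfr⟩
    linarith [hs.1, hr.1]
  exact ⟨sSup S, ⟨htS.1.1, htS.1.2.lt_of_ne fun heq ↦ hb.ne (heq ▸ htS.2)⟩, htS.2, hlt⟩

lemma exists_first_eq_of_lt_of_le {f : ℝ → ℝ} {a b c : ℝ} (hab : a ≤ b)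
    (hf : ContinuousOn f (Icc a b)) (ha : f a < c) (hb : c ≤ f b) :
    ∃ t ∈ Ioc a b, f t = c ∧ ∀ s ∈ Ico a t, f s < c := by
  have hf' : ContinuousOn (fun t ↦ f (-t)) (Icc (-b) (-a)) :=
    hf.comp continuousOn_neg fun t ht ↦ ⟨le_neg.1 ht.2, neg_le.1 ht.1⟩
  obtain ⟨t, ht, hft, hlt⟩ := exists_last_eq_of_le_of_lt (neg_le_neg hab) hf'
    (by simpa using hb) (by simpa using ha)
  refine ⟨-t, ⟨lt_neg.1 ht.2, neg_le.1 ht.1⟩, hft, fun s hs ↦ ?_⟩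
  simpa using hlt (-s) ⟨lt_neg.1 hs.2, neg_le_neg hs.1⟩

lemma false_of_leave_and_return_below {y z g : ℝ → ℝ} {a b K : ℝ} (hab : a < b) (hK : K < 0)
    (hya : HasDerivWithinAt y (z a + K) (Icc a b) a)
    (hyb : HasDerivWithinAt y (z b + K) (Icc a b) b)
    (hz : ∀ t ∈ Icc a b, HasDerivWithinAt z (z t * g t) (Icc a b) t)
    (hz₀ : ∀ t ∈ Icc a b, 0 ≤ z t) (hg : ∀ t ∈ Ioo a b, g t < 0)
    (hyab : y a = y b) (hbelow : ∀ t ∈ Ioo a b, y t < y a) : False := by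
  have hmax : ∀ t ∈ Icc a b, y t ≤ y a := by
    rintro t ⟨hat, htb⟩
    rcases hat.eq_or_lt with rfl | hat
    · exact le_rfl
    rcases htb.eq_or_lt with rfl | htb
    · exact hyab.ge
    · exact (hbelow t ⟨hat, htb⟩).le
  have hza : z a + K ≤ 0 := IsMaxOn.hasDerivWithinAt_Icc_left_nonpos hab hmax hya
  have hzb : 0 ≤ z b + K :=
    IsMaxOn.hasDerivWithinAt_Icc_right_nonneg hab (fun t ht ↦ hyab ▸ hmax t ht) hyb
  have hanti : AntitoneOn z (Icc a b) := by
    refine antitoneOn_of_hasDerivWithinAt_nonpos (f' := fun t ↦ z t * g t) (convex_Icc a b)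
      (fun t ht ↦ (hz t ht).continuousWithinAt) (fun t ht ↦ ?_) (fun t ht ↦ ?_)
    · rw [interior_Icc] at ht ⊢
      exact (hz t (Ioo_subset_Icc_self ht)).mono Ioo_subset_Icc_self
    · rw [interior_Icc] at ht
      exact mul_nonpos_of_nonneg_of_nonpos (hz₀ t (Ioo_subset_Icc_self ht)) (hg t ht).le
  have hconst : ∀ t ∈ Icc a b, z t = -K := fun t ht ↦ by
    linarith [hanti (left_mem_Icc.2 hab.le) ht ht.1, hanti ht (right_mem_Icc.2 hab.le) ht.2]
  obtain ⟨t, ht⟩ := nonempty_Ioo.2 hab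
  have hnhds : Icc a b ∈ 𝓝 t := Icc_mem_nhds ht.1 ht.2
  have hderiv : HasDerivAt z (z t * g t) t := (hz t (Ioo_subset_Icc_self ht)).hasDerivAt hnhds
  have hderiv₀ : HasDerivAt z 0 t :=
    (hasDerivAt_const t (-K)).congr_of_eventuallyEq (eventually_of_mem hnhds hconst)
  have : z t * g t < 0 :=
    mul_neg_of_pos_of_neg (by linarith [hconst t (Ioo_subset_Icc_self ht)]) (hg t ht)
  exact this.ne (hderiv.unique hderiv₀)

lemma critical_plane_drift_neg (N : ℕ) {m p σ : ℝ}
    (hm1 : max ((N : ℝ) - 2) 0 / N < m) (hm2 : m < 1) (hp : 1 < p)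
    (hσ : 2 * (p - 1) / (1 - m) < σ) :
    ((N : ℝ) - 2) * ((σ + 2) / (p - m)) - m * ((σ + 2) / (p - m)) ^ 2 < 0 := by
  have hm0 : 0 < m := (div_nonneg (le_max_right _ _) N.cast_nonneg).trans_lt hm1
  have hpm : 0 < p - m := by linarith
  have hσ' : 2 * (p - 1) < σ * (1 - m) := (div_lt_iff₀ (by linarith)).1 hσ
  have hσ0 : 0 < σ := (div_pos (by linarith) (by linarith)).trans hσ
  have hcross : ((N : ℝ) - 2) * (p - m) < m * (σ + 2) := by
    rcases le_or_gt ((N : ℝ) - 2) 0 with hN | hN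
    · nlinarith [mul_nonpos_of_nonpos_of_nonneg hN hpm.le]
    · rw [max_eq_left hN.le, div_lt_iff₀ (by linarith)] at hm1
      nlinarith [mul_lt_mul_of_pos_left hσ' hm0]
  have hq : 0 < (σ + 2) / (p - m) := div_pos (by linarith) hpm
  have : (N : ℝ) - 2 < m * ((σ + 2) / (p - m)) := by
    rwa [mul_div_assoc', lt_div_iff₀ hpm]
  nlinarith

lemma y_rhs_eq_of_critical_plane {N m p σ x y z : ℝ} (hpm : p - m ≠ 0) (hσ : σ + 2 ≠ 0)
    (hy : y = -((σ + 2) / (p - m))) :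
    -x - (N - 2) * y + z - m * y ^ 2 - (p - m) / (σ + 2) * x * y
      = z + ((N - 2) * ((σ + 2) / (p - m)) - m * ((σ + 2) / (p - m)) ^ 2) := by
  subst hy
  field_simp
  ring

theorem stmt12_general (N : ℕ) (m p σ : ℝ)
    (hm1 : max ((N : ℝ) - 2) 0 / N < m) (hm2 : m < 1) (hp : 1 < p)
    (hσ : 2 * (p - 1) / (1 - m) < σ)
    (I : Set ℝ) (hI : I.OrdConnected)
    (x y z : ℝ → ℝ)
    (hy : ∀ η ∈ I, HasDerivWithinAt y (-(x η) - ((N : ℝ) - 2) * y η + z η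
      - m * (y η) ^ 2 - (p - m) / (σ + 2) * x η * y η) I η)
    (hz : ∀ η ∈ I, HasDerivWithinAt z (z η * (σ + 2 + (p - m) * y η)) I η)
    (hzpos : ∀ η ∈ I, 0 ≤ z η)
    (η₁ η₂ : ℝ) (hη₁ : η₁ ∈ I) (hη₂ : η₂ ∈ I) (h12 : η₁ < η₂)
    (hy1 : -((σ + 2) / (p - m)) < y η₁) (hy2 : y η₂ < -((σ + 2) / (p - m))) :
    ∀ η ∈ I, η₂ < η → y η < -((σ + 2) / (p - m)) := by
  intro η hη hη₂η
  by_contra! hreturn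
  have hpm : 0 < p - m := by linarith
  have hσ2 : 0 < σ + 2 := by
    have : 0 < 2 * (p - 1) / (1 - m) := div_pos (by linarith) (by linarith)
    linarith
  have hycont : ContinuousOn y I := fun t ht ↦ (hy t ht).continuousWithinAt
  obtain ⟨η₀, hη₀, hyη₀, hbelow₀⟩ :=
    exists_last_eq_of_le_of_lt h12.le (hycont.mono (hI.out hη₁ hη₂)) hy1.le hy2
  obtain ⟨η₃, hη₃, hyη₃, hbelow₃⟩ :=
    exists_first_eq_of_lt_of_le hη₂η.le (hycont.mono (hI.out hη₂ hη)) hy2 hreturn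
  have hη₀₃ : η₀ < η₃ := hη₀.2.trans hη₃.1
  have hsub : Icc η₀ η₃ ⊆ I := hI.out (hI.out hη₁ hη₂ (Ico_subset_Icc_self hη₀))
    (hI.out hη₂ hη (Ioc_subset_Icc_self hη₃))
  have hbelow : ∀ t ∈ Ioo η₀ η₃, y t < -((σ + 2) / (p - m)) := fun t ht ↦ by
    rcases le_or_gt t η₂ with h | h
    exacts [hbelow₀ t ⟨ht.1, h⟩, hbelow₃ t ⟨h.le, ht.2⟩]
  have hyplane : ∀ t ∈ Icc η₀ η₃, y t = -((σ + 2) / (p - m)) → HasDerivWithinAt y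
      (z t + ((N - 2) * ((σ + 2) / (p - m)) - m * ((σ + 2) / (p - m)) ^ 2)) (Icc η₀ η₃) t :=
    fun t ht hyt ↦ ((hy t (hsub ht)).mono hsub).congr_deriv
      (y_rhs_eq_of_critical_plane hpm.ne' hσ2.ne' hyt)
  refine false_of_leave_and_return_below hη₀₃ (critical_plane_drift_neg N hm1 hm2 hp hσ)
    (hyplane η₀ (left_mem_Icc.2 hη₀₃.le) hyη₀) (hyplane η₃ (right_mem_Icc.2 hη₀₃.le) hyη₃)
    (fun t ht ↦ (hz t (hsub ht)).mono hsub) (fun t ht ↦ hzpos t (hsub ht))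
    (fun t ht ↦ ?_) (hyη₀.trans hyη₃.symm) (fun t ht ↦ hyη₀ ▸ hbelow t ht)
  have := mul_lt_mul_of_pos_left (hbelow t ht) hpm
  rw [mul_neg, mul_div_cancel₀ _ hpm.ne'] at this
  linarith

/-- The plane y = -(σ+2)/(p-m) is a no-return plane in the decreasing
y-direction for trajectories of (S) with nonnegative x and z coordinates. -/
theorem stmt12 (N : ℕ) (hN : 1 ≤ N) (m p σ : ℝ)
    (hm1 : max ((N : ℝ) - 2) 0 / N < m) (hm2 : m < 1) (hp : 1 < p)
    (hσ : 2 * (p - 1) / (1 - m) < σ)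
    (I : Set ℝ) (hI : I.OrdConnected)
    (x y z : ℝ → ℝ)
    (hx : ∀ η ∈ I, HasDerivWithinAt x (x η * (2 + (1 - m) * y η)) I η)
    (hy : ∀ η ∈ I, HasDerivWithinAt y (-(x η) - ((N : ℝ) - 2) * y η + z η
      - m * (y η) ^ 2 - (p - m) / (σ + 2) * x η * y η) I η)
    (hz : ∀ η ∈ I, HasDerivWithinAt z (z η * (σ + 2 + (p - m) * y η)) I η)
    (hxpos : ∀ η ∈ I, 0 ≤ x η) (hzpos : ∀ η ∈ I, 0 ≤ z η)
    (η₁ η₂ : ℝ) (hη₁ : η₁ ∈ I) (hη₂ : η₂ ∈ I) (h12 : η₁ < η₂)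
    (hy1 : -((σ + 2) / (p - m)) < y η₁) (hy2 : y η₂ < -((σ + 2) / (p - m))) :
    ∀ η ∈ I, η₂ < η → y η < -((σ + 2) / (p - m)) :=
  stmt12_general N m p σ hm1 hm2 hp hσ I hI x y z hy hz hzpos η₁ η₂ hη₁ hη₂ h12 hy1 hy2
end
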